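/- arXiv:1805.06403 — 3 statements merged into one kernel-verified Lean document; each statement's English description precedes it below -/
import Mathlib

section
/- Let χ = {a_0 < a_1 < ... < a_k} be a finite subset of ℝ and let f_χ(x) = 2·dist(x, χ) = 2·min_i |x - a_i|. For any r > 0 that is not equal to any gap a_{i+1} - a_i, the number of connected components of the sublevel set f_χ^{-1}((-∞, r]) equals 1 plus the number of indices i with a_{i+1} - a_i > r. -/
/-!
Write `S` for the union of the intervals `[a i - r/2, a i + r/2]`. Two points of a subset of `ℝ`
lie in the same connected component exactly when the closed interval between them lies in the
subset. For `S`, that interval fails to lie in `S` exactly when it contains the midpoint of a gap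
longer than `r`, and such a midpoint is never in `S`. So the component of `x ∈ S` is determined by
the last such gap whose midpoint lies below `x`. The possible values are "no gap" and each of the
long gaps.
-/

open Metric Set

theorem Fin.exists_castSucc_and_not_succ {n : ℕ} {p : Fin (n + 1) → Prop} (h0 : p 0)
    (hlast : ¬p (Fin.last n)) : ∃ i : Fin n, p i.castSucc ∧ ¬p i.succ := by
  by_contra! h
  exact hlast (Fin.induction h0 h (Fin.last n))

theorem Nat.card_connectedComponents_eq_card_range {X β : Type*} [TopologicalSpace X]
    (φ : X → β) (h : ∀ x y : X, connectedComponent x = connectedComponent y ↔ φ x = φ y) :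
    Nat.card (ConnectedComponents X) = Nat.card (range φ) :=
  Nat.card_congr ((Quotient.congrRight h).trans (Setoid.quotientKerEquivRange φ))

theorem connectedComponent_eq_iff_uIcc_subset {α : Type*} [ConditionallyCompleteLinearOrder α]
    [TopologicalSpace α] [OrderTopology α] [DenselyOrdered α] {s : Set α} (x y : s) :
    connectedComponent x = connectedComponent y ↔ uIcc (x : α) y ⊆ s := by
  constructor
  · intro h
    have hy : y ∈ connectedComponent x := h ▸ mem_connectedComponent
    have hpre : IsPreconnected (((↑) : s → α) '' connectedComponent x) :=
      isPreconnected_connectedComponent.image _ continuous_subtype_val.continuousOn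
    exact ((isPreconnected_iff_ordConnected.mp hpre).uIcc_subset
      (mem_image_of_mem _ mem_connectedComponent) (mem_image_of_mem _ hy)).trans
      ((image_subset_range _ _).trans Subtype.range_val.subset)
  · intro h
    have hpre : IsPreconnected (((↑) : s → α) ⁻¹' uIcc x y) := by
      rw [← Topology.IsInducing.subtypeVal.isPreconnected_image,
        image_preimage_eq_of_subset (by simpa using h)]
      exact isPreconnected_uIcc
    exact connectedComponent_eq
      (hpre.subset_connectedComponent (x := x) left_mem_uIcc right_mem_uIcc)

theorem setOf_two_mul_infDist_le_eq_iUnion_Icc {ι : Type*} [Finite ι] [Nonempty ι]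
    (a : ι → ℝ) (r : ℝ) :
    {x | 2 * infDist x (range a) ≤ r} = ⋃ i, Icc (a i - r / 2) (a i + r / 2) := by
  ext x
  obtain ⟨_, ⟨j, rfl⟩, hj⟩ :=
    (finite_range a).isCompact.exists_infDist_eq_dist (range_nonempty a) x
  simp only [mem_ofPred_eq, mem_iUnion, ← Real.closedBall_eq_Icc, mem_closedBall]
  constructor
  · exact fun h => ⟨j, by linarith⟩
  · rintro ⟨i, hi⟩
    linarith [infDist_le_dist_of_mem (x := x) (mem_range_self (f := a) i)]

section SortedPoints

variable {k : ℕ} {a : Fin (k + 1) → ℝ} {r : ℝ}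

variable (a r) in
noncomputable def bigGaps : Finset (Fin k) := {j | r < a j.succ - a j.castSucc}

variable (a) in
noncomputable def gapMidpoint (j : Fin k) : ℝ := (a j.castSucc + a j.succ) / 2

variable (a r) in
noncomputable def lastBigGapBelow (x : ℝ) : WithBot (Fin k) :=
  ((bigGaps a r).filter (gapMidpoint a · < x)).max

theorem gapMidpoint_mem_Ioo {ρ : ℝ} {j : Fin k} (h : 2 * ρ < a j.succ - a j.castSucc) :
    gapMidpoint a j ∈ Ioo (a j.castSucc + ρ) (a j.succ - ρ) := by
  constructor <;> · simp only [gapMidpoint]; linarith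

theorem gapMidpoint_mem_Ioo_self (ha : StrictMono a) (j : Fin k) :
    gapMidpoint a j ∈ Ioo (a j.castSucc) (a j.succ) := by
  simpa using gapMidpoint_mem_Ioo (ρ := 0) (by simpa using ha j.castSucc_lt_succ)

theorem gapMidpoint_strictMono (ha : StrictMono a) : StrictMono (gapMidpoint a) := by
  intro i j hij
  have h1 := ha (Fin.castSucc_lt_castSucc_iff.mpr hij)
  have h2 := ha (Fin.succ_lt_succ_iff.mpr hij)
  simp only [gapMidpoint]
  linarith

theorem notMem_iUnion_Icc_of_mem_gap (ha : Monotone a) {j : Fin k} {w : ℝ}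
    (hw : w ∈ Ioo (a j.castSucc + r / 2) (a j.succ - r / 2)) :
    w ∉ ⋃ i, Icc (a i - r / 2) (a i + r / 2) := by
  simp only [mem_iUnion, mem_Icc, not_exists, not_and_or, not_le]
  intro i
  rcases le_or_gt i j.castSucc with h | h
  · exact Or.inr (by linarith [ha h, hw.1])
  · exact Or.inl (by linarith [ha (Fin.castSucc_lt_iff_succ_le.mp h), hw.2])

theorem exists_mem_gap_of_notMem_iUnion_Icc (ha : Monotone a) {x y z : ℝ}
    (hx : x ∈ ⋃ i, Icc (a i - r / 2) (a i + r / 2))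
    (hy : y ∈ ⋃ i, Icc (a i - r / 2) (a i + r / 2))
    (hxz : x ≤ z) (hzy : z ≤ y) (hz : z ∉ ⋃ i, Icc (a i - r / 2) (a i + r / 2)) :
    ∃ j : Fin k, z ∈ Ioo (a j.castSucc + r / 2) (a j.succ - r / 2) := by
  simp only [mem_iUnion, mem_Icc, not_exists, not_and_or, not_le] at hx hy hz
  obtain ⟨i, hi, -⟩ := hx
  obtain ⟨l, -, hl⟩ := hy
  have h0 : a 0 + r / 2 < z := by
    rcases hz i with h | h
    · linarith
    · linarith [ha (Fin.zero_le i)]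
  have hlast : ¬a (Fin.last k) + r / 2 < z := by linarith [ha (Fin.le_last l)]
  obtain ⟨j, hj, hj'⟩ :=
    Fin.exists_castSucc_and_not_succ (p := fun i => a i + r / 2 < z) h0 hlast
  exact ⟨j, hj, (hz j.succ).resolve_right hj'⟩

theorem Icc_subset_iUnion_Icc_iff (ha : Monotone a) {x y : ℝ}
    (hx : x ∈ ⋃ i, Icc (a i - r / 2) (a i + r / 2))
    (hy : y ∈ ⋃ i, Icc (a i - r / 2) (a i + r / 2)) :
    Icc x y ⊆ ⋃ i, Icc (a i - r / 2) (a i + r / 2) ↔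
      ∀ j ∈ bigGaps a r, gapMidpoint a j ∉ Ico x y := by
  constructor
  · intro h j hj hmid
    have hgap : 2 * (r / 2) < a j.succ - a j.castSucc := by
      have := (Finset.mem_filter.mp hj).2
      linarith
    exact notMem_iUnion_Icc_of_mem_gap ha (gapMidpoint_mem_Ioo hgap)
      (h (Ico_subset_Icc_self hmid))
  · intro h z hz
    by_contra hzS
    obtain ⟨j, hzj⟩ := exists_mem_gap_of_notMem_iUnion_Icc ha hx hy hz.1 hz.2 hzS
    have hxj : x ≤ a j.castSucc + r / 2 := by
      by_contra! hxj
      exact notMem_iUnion_Icc_of_mem_gap ha ⟨hxj, hz.1.trans_lt hzj.2⟩ hx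
    have hyj : a j.succ - r / 2 ≤ y := by
      by_contra! hyj
      exact notMem_iUnion_Icc_of_mem_gap ha ⟨hzj.1.trans_le hz.2, hyj⟩ hy
    have hgap : 2 * (r / 2) < a j.succ - a j.castSucc := by linarith [hzj.1, hzj.2]
    have hmid := gapMidpoint_mem_Ioo hgap
    exact h j (Finset.mem_filter.mpr ⟨Finset.mem_univ _, by linarith⟩)
      ⟨by linarith [hmid.1], by linarith [hmid.2]⟩

theorem lastBigGapBelow_eq_iff (ha : StrictMono a) {x y : ℝ} (hxy : x ≤ y) :
    lastBigGapBelow a r x = lastBigGapBelow a r y ↔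
      ∀ j ∈ bigGaps a r, gapMidpoint a j ∉ Ico x y := by
  constructor
  · rintro h j hj ⟨hxj, hjy⟩
    have hle : (j : WithBot (Fin k)) ≤ lastBigGapBelow a r y :=
      Finset.le_max (Finset.mem_filter.mpr ⟨hj, hjy⟩)
    have hlt : lastBigGapBelow a r x < j := by
      rw [lastBigGapBelow, Finset.max_eq_sup_withBot, Finset.sup_lt_iff (WithBot.bot_lt_coe j)]
      intro i hi
      exact WithBot.coe_lt_coe.mpr
        ((gapMidpoint_strictMono ha).lt_iff_lt.mp ((Finset.mem_filter.mp hi).2.trans_le hxj))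
    exact (hlt.trans_le (h ▸ hle)).ne rfl
  · intro h
    by_contra hne
    have hlt : lastBigGapBelow a r x < lastBigGapBelow a r y :=
      lt_of_le_of_ne (Finset.max_mono fun i hi => by
        simp only [Finset.mem_filter] at hi ⊢; exact ⟨hi.1, hi.2.trans_le hxy⟩) hne
    obtain ⟨j, hj⟩ := WithBot.ne_bot_iff_exists.mp (bot_le.trans_lt hlt).ne'
    have hjy := Finset.mem_filter.mp (Finset.mem_of_max hj.symm)
    have hjx : j ∉ (bigGaps a r).filter (gapMidpoint a · < x) :=
      Finset.notMem_of_max_lt_coe (hj ▸ hlt)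
    simp only [Finset.mem_filter, not_and, not_lt] at hjx
    exact h j hjy.1 ⟨hjx hjy.1, hjy.2⟩

theorem connectedComponent_eq_iff_lastBigGapBelow_eq (ha : StrictMono a)
    (x y : ⋃ i, Icc (a i - r / 2) (a i + r / 2)) :
    connectedComponent x = connectedComponent y ↔
      lastBigGapBelow a r x = lastBigGapBelow a r y := by
  rw [connectedComponent_eq_iff_uIcc_subset]
  rcases le_total (x : ℝ) y with hxy | hyx
  · rw [uIcc_of_le hxy, Icc_subset_iUnion_Icc_iff ha.monotone x.2 y.2,
      lastBigGapBelow_eq_iff ha hxy]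
  · rw [uIcc_of_ge hyx, Icc_subset_iUnion_Icc_iff ha.monotone y.2 x.2,
      eq_comm (a := lastBigGapBelow a r x), lastBigGapBelow_eq_iff ha hyx]

theorem range_lastBigGapBelow (ha : StrictMono a) (hr : 0 ≤ r) :
    range (fun x : ⋃ i, Icc (a i - r / 2) (a i + r / 2) => lastBigGapBelow a r x) =
      ↑(insert ⊥ ((bigGaps a r).image (↑)) : Finset (WithBot (Fin k))) := by
  have hmem : ∀ i, a i ∈ ⋃ i, Icc (a i - r / 2) (a i + r / 2) := fun i =>
    mem_iUnion.mpr ⟨i, by constructor <;> linarith⟩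
  ext v
  simp only [mem_range, Finset.coe_insert, Finset.coe_image, mem_insert_iff, mem_image]
  constructor
  · rintro ⟨x, rfl⟩
    rcases eq_or_ne (lastBigGapBelow a r x) ⊥ with h | h
    · exact Or.inl h
    · obtain ⟨j, hj⟩ := WithBot.ne_bot_iff_exists.mp h
      exact Or.inr ⟨j, (Finset.mem_filter.mp (Finset.mem_of_max hj.symm)).1, hj⟩
  · rintro (rfl | ⟨j, hj, rfl⟩)
    · refine ⟨⟨a 0, hmem 0⟩,
        Finset.max_eq_bot.mpr (Finset.filter_eq_empty_iff.mpr fun j _ hj => ?_)⟩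
      linarith [(gapMidpoint_mem_Ioo_self ha j).1, ha.monotone (Fin.zero_le j.castSucc)]
    · refine ⟨⟨a j.succ, hmem j.succ⟩, le_antisymm (Finset.max_le fun i hi => ?_)
        (Finset.le_max (Finset.mem_filter.mpr ⟨hj, ?_⟩))⟩
      · refine WithBot.coe_le_coe.mpr (not_lt.mp fun hji => ?_)
        linarith [(Finset.mem_filter.mp hi).2, (gapMidpoint_mem_Ioo_self ha i).1,
          ha.monotone (Fin.succ_le_castSucc_iff.mpr hji)]
      · exact (gapMidpoint_mem_Ioo_self ha j).2

end SortedPoints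

theorem stmt1_general (k : ℕ) (a : Fin (k + 1) → ℝ) (ha : StrictMono a) (r : ℝ) (hr : 0 < r) :
    Nat.card (ConnectedComponents {x : ℝ | 2 * Metric.infDist x (Set.range a) ≤ r}) =
      1 + (Finset.univ.filter fun i : Fin k => r < a i.succ - a i.castSucc).card := by
  rw [setOf_two_mul_infDist_le_eq_iUnion_Icc,
    Nat.card_connectedComponents_eq_card_range _ (connectedComponent_eq_iff_lastBigGapBelow_eq ha),
    range_lastBigGapBelow ha hr.le, Nat.card_coe_set_eq, Set.ncard_coe_finset,
    Finset.card_insert_of_notMem (by simp),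
    Finset.card_image_of_injective _ WithBot.coe_injective, add_comm]
  rfl

/-- For χ = {a 0 < ... < a k} ⊂ ℝ and f_χ(x) = 2·dist(x, χ), for any r > 0 not equal to
any gap, the number of connected components of the sublevel set f_χ⁻¹((-∞, r]) equals
1 plus the number of gaps strictly greater than r. -/
theorem stmt1 (k : ℕ) (a : Fin (k + 1) → ℝ) (ha : StrictMono a) (r : ℝ) (hr : 0 < r)
    (hgap : ∀ i : Fin k, a i.succ - a i.castSucc ≠ r) :
    Nat.card (ConnectedComponents {x : ℝ | 2 * Metric.infDist x (Set.range a) ≤ r}) =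
      1 + (Finset.univ.filter fun i : Fin k => r < a i.succ - a i.castSucc).card :=
  stmt1_general k a ha r hr
end

section
/- For points on the real line, the connected components of the geometric graph coincide with those of the union of intervals: for finite χ ⊂ ℝ and r > 0, two points x, y ∈ χ lie in the same connected component of the graph Č(χ, r) (edges between points at distance ≤ r) if and only if they lie in the same connected component of ∪_{a∈χ}[a − r/2, a + r/2]. -/
open Set

private lemma adj_comp_eq {χ : Set ℝ} {r : ℝ} (hr : 0 < r) (a b : χ)
    (hab : |(a : ℝ) - (b : ℝ)| ≤ r) :
    connectedComponentIn (⋃ a ∈ χ, Set.Icc (a - r / 2) (a + r / 2)) (a : ℝ) =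
      connectedComponentIn (⋃ a ∈ χ, Set.Icc (a - r / 2) (a + r / 2)) (b : ℝ) := by
  set U := ⋃ a ∈ χ, Set.Icc ((a : ℝ) - r / 2) (a + r / 2) with hU
  obtain ⟨h1, h2⟩ := abs_le.mp hab
  set s := Set.Icc ((a : ℝ) - r / 2) (a + r / 2) ∪ Set.Icc ((b : ℝ) - r / 2) (b + r / 2) with hs
  have hm1 : ((a : ℝ) + b) / 2 ∈ Set.Icc ((a : ℝ) - r / 2) (a + r / 2) :=
    Set.mem_Icc.mpr ⟨by linarith, by linarith⟩
  have hm2 : ((a : ℝ) + b) / 2 ∈ Set.Icc ((b : ℝ) - r / 2) (b + r / 2) :=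
    Set.mem_Icc.mpr ⟨by linarith, by linarith⟩
  have hsc : IsPreconnected s :=
    IsPreconnected.union _ hm1 hm2 isPreconnected_Icc isPreconnected_Icc
  have hsub : s ⊆ U := by
    apply Set.union_subset
    · intro t ht; exact Set.mem_biUnion a.2 ht
    · intro t ht; exact Set.mem_biUnion b.2 ht
  have has : (a : ℝ) ∈ s := Or.inl ⟨by linarith, by linarith⟩
  have hbs : (b : ℝ) ∈ s := Or.inr ⟨by linarith, by linarith⟩
  exact connectedComponentIn_eq (hsc.subset_connectedComponentIn has hsub hbs)

private lemma chain_reach {χ : Set ℝ} (hχ : χ.Finite) {r : ℝ} (hr : 0 < r)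
    {G : SimpleGraph χ}
    (hG : ∀ x y : χ, G.Adj x y ↔ x ≠ y ∧ |(x : ℝ) - (y : ℝ)| ≤ r) :
    ∀ n : ℕ, ∀ x y : χ, (χ ∩ Set.Ioc (x : ℝ) (y : ℝ)).ncard ≤ n → (x : ℝ) ≤ y →
      Set.Icc (x : ℝ) (y : ℝ) ⊆ (⋃ a ∈ χ, Set.Icc (a - r / 2) (a + r / 2)) →
      G.Reachable x y := by
  intro n
  induction n with
  | zero =>
    intro x y hcard hxy _
    rcases eq_or_lt_of_le hxy with heq | hlt
    · exact (Subtype.ext heq) ▸ SimpleGraph.Reachable.refl x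
    · exfalso
      have hy : (y : ℝ) ∈ χ ∩ Set.Ioc (x : ℝ) (y : ℝ) := ⟨y.2, hlt, le_refl _⟩
      have hfin : (χ ∩ Set.Ioc (x : ℝ) (y : ℝ)).Finite := hχ.inter_of_left _
      have := Set.ncard_pos hfin |>.mpr ⟨_, hy⟩
      omega
  | succ n ih =>
    intro x y hcard hxy hsub
    rcases eq_or_lt_of_le hxy with heq | hlt
    · exact (Subtype.ext heq) ▸ SimpleGraph.Reachable.refl x
    by_cases hnear : (y : ℝ) - x ≤ r
    · refine SimpleGraph.Adj.reachable ((hG x y).mpr ⟨?_, ?_⟩)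
      · exact fun h => absurd (congrArg Subtype.val h) (ne_of_lt hlt)
      · rw [abs_sub_comm, abs_of_nonneg (by linarith)]; exact hnear
    push_neg at hnear
    -- take minimal element of χ ∩ Ioc x y
    have hfin : (χ ∩ Set.Ioc (x : ℝ) (y : ℝ)).Finite := hχ.inter_of_left _
    have hne : (hfin.toFinset).Nonempty := by
      refine ⟨(y : ℝ), ?_⟩
      simp only [Set.Finite.mem_toFinset]
      exact ⟨y.2, hlt, le_refl _⟩
    set w : ℝ := hfin.toFinset.min' hne with hw
    have hwmem : w ∈ χ ∩ Set.Ioc (x : ℝ) (y : ℝ) :=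
      Set.Finite.mem_toFinset hfin |>.mp (hfin.toFinset.min'_mem hne)
    have hwmin : ∀ a ∈ χ ∩ Set.Ioc (x : ℝ) (y : ℝ), w ≤ a := by
      intro a ha
      exact hfin.toFinset.min'_le a (by simpa using ha)
    obtain ⟨hwχ, hxw, hwy⟩ := hwmem
    -- claim w - x ≤ r
    have hclaim : w - x ≤ r := by
      by_contra hcon
      push_neg at hcon
      have hq : ((x : ℝ) + w) / 2 ∈ Set.Icc (x : ℝ) (y : ℝ) := ⟨by linarith, by linarith⟩
      have hqU := hsub hq
      rw [Set.mem_iUnion₂] at hqU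
      obtain ⟨a, haχ, haq⟩ := hqU
      rw [Set.mem_Icc] at haq
      have hax : (x : ℝ) < a := by
        obtain ⟨h1, h2⟩ := haq; linarith
      have haw : a < w := by
        obtain ⟨h1, h2⟩ := haq; linarith
      have := hwmin a ⟨haχ, hax, le_of_lt (lt_of_lt_of_le haw hwy)⟩
      linarith
    set w' : χ := ⟨w, hwχ⟩ with hw'
    have hadj : G.Adj x w' := by
      refine (hG x w').mpr ⟨?_, ?_⟩
      · intro h
        have : (x : ℝ) = w := congrArg Subtype.val h
        linarith
      · rw [abs_sub_comm]
        rw [abs_of_nonneg (by simp only [hw']; linarith)]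
        simpa using hclaim
    refine hadj.reachable.trans (ih w' y ?_ hwy ?_)
    · show (χ ∩ Set.Ioc w (y : ℝ)).ncard ≤ n
      have hss : χ ∩ Set.Ioc (w : ℝ) (y : ℝ) ⊂ χ ∩ Set.Ioc (x : ℝ) (y : ℝ) := by
        constructor
        · intro a ⟨ha1, ha2, ha3⟩
          exact ⟨ha1, lt_trans hxw ha2, ha3⟩
        · intro hc
          have := hc ⟨hwχ, hxw, hwy⟩
          exact absurd this.2.1 (lt_irrefl w)
      have := Set.ncard_lt_ncard hss hfin
      omega
    · intro t ht
      exact hsub ⟨le_trans (le_of_lt hxw) ht.1, ht.2⟩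

/-- For finite χ ⊂ ℝ and r > 0, two points of χ lie in the same connected component of
the geometric graph Č(χ, r) iff they lie in the same connected component of the union of
intervals [a - r/2, a + r/2], a ∈ χ. -/
theorem stmt17 (χ : Set ℝ) (hχ : χ.Finite) (r : ℝ) (hr : 0 < r)
    (G : SimpleGraph χ)
    (hG : ∀ x y : χ, G.Adj x y ↔ x ≠ y ∧ |(x : ℝ) - (y : ℝ)| ≤ r) :
    ∀ x y : χ, G.Reachable x y ↔
      connectedComponentIn (⋃ a ∈ χ, Set.Icc (a - r / 2) (a + r / 2)) (x : ℝ) =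
        connectedComponentIn (⋃ a ∈ χ, Set.Icc (a - r / 2) (a + r / 2)) (y : ℝ) := by
  intro x y
  set U := ⋃ a ∈ χ, Set.Icc ((a : ℝ) - r / 2) (a + r / 2) with hU
  constructor
  · intro h
    obtain ⟨w⟩ := h
    induction w with
    | nil => rfl
    | cons h p ih =>
      exact (adj_comp_eq hr _ _ ((hG _ _).mp h).2).trans ih
  · intro h
    have hyU : (y : ℝ) ∈ U := Set.mem_biUnion y.2 ⟨by linarith, by linarith⟩
    have hxU : (x : ℝ) ∈ U := Set.mem_biUnion x.2 ⟨by linarith, by linarith⟩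
    have hxC : (x : ℝ) ∈ connectedComponentIn U (x : ℝ) := mem_connectedComponentIn hxU
    have hyC : (y : ℝ) ∈ connectedComponentIn U (x : ℝ) := by
      rw [h]; exact mem_connectedComponentIn hyU
    have hpre : IsPreconnected (connectedComponentIn U (x : ℝ)) :=
      isPreconnected_connectedComponentIn
    have hord := hpre.ordConnected
    have hCU : connectedComponentIn U (x : ℝ) ⊆ U := connectedComponentIn_subset U _
    rcases le_total (x : ℝ) (y : ℝ) with hle | hle
    · have hIcc : Set.Icc (x : ℝ) (y : ℝ) ⊆ U :=
        fun t ht => hCU (hord.out hxC hyC ht)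
      exact chain_reach hχ hr hG _ x y (le_refl _) hle hIcc
    · have hIcc : Set.Icc (y : ℝ) (x : ℝ) ⊆ U :=
        fun t ht => hCU (hord.out hyC hxC ht)
      exact (chain_reach hχ hr hG _ y x (le_refl _) hle hIcc).symm
end

section
/- Let G be a finite connected weighted graph and T a minimal spanning tree of G. For any r ∈ ℝ, the subgraph T_r of T consisting of edges with weight at most r is a minimal spanning forest of the subgraph G_r of G consisting of edges with weight at most r; in particular T_r and G_r have the same partition of the vertex set into connected components. -/
/-- Total weight of a graph: sum of edge weights over its edge set. -/
noncomputable def totalWeight {V : Type*} (w : Sym2 V → ℝ) (G : SimpleGraph V) : ℝ :=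
  ∑ᶠ e ∈ G.edgeSet, w e

/-- `F` is a minimal spanning forest of `G` (with weights `w`): an acyclic subgraph with
the same connected components as `G` whose total weight is minimal among all such. -/
def IsMSF {V : Type*} (w : Sym2 V → ℝ) (F G : SimpleGraph V) : Prop :=
  F ≤ G ∧ F.IsAcyclic ∧ (∀ x y : V, F.Reachable x y ↔ G.Reachable x y) ∧
    ∀ F' : SimpleGraph V, F' ≤ G → F'.IsAcyclic →
      (∀ x y : V, F'.Reachable x y ↔ G.Reachable x y) →
      totalWeight w F ≤ totalWeight w F'

/-!
The argument rests on the cut property of a minimal spanning tree `T`: if `ab` is an edge of `T`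
and `uv` an edge of `G` with `w(uv) < w(ab)`, then `u` and `v` stay connected in `T - ab`, since
otherwise exchanging `ab` for `uv` would give a lighter spanning tree.

For an edge `uv` of `G_r`, each edge `ab` of the `T`-path from `u` to `v` separates `u` from `v`
in `T - ab`, so `w(ab) ≤ w(uv) ≤ r`: the path lies in `T_r`, and `T_r`, `G_r` have the same
components. Given another spanning forest `F` of `G_r`, the graph `F ∪ (T - T_r)` is connected,
and it is acyclic because by the cut property every edge of `T - T_r` is still a bridge in it. So
it is a spanning tree of `G`, and comparing its weight with that of `T` gives `w(T_r) ≤ w(F)`.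
-/

open SimpleGraph

namespace SimpleGraph

variable {V : Type*} {G : SimpleGraph V}

/-- The paper's `G_r`. -/
def sublevel (G : SimpleGraph V) (w : Sym2 V → ℝ) (r : ℝ) : SimpleGraph V :=
  G.deleteEdges {e | r < w e}

@[simp]
lemma sublevel_adj {w : Sym2 V → ℝ} {r : ℝ} {x y : V} :
    (G.sublevel w r).Adj x y ↔ G.Adj x y ∧ w s(x, y) ≤ r := by
  simp [sublevel]

lemma sublevel_le (w : Sym2 V → ℝ) (r : ℝ) : G.sublevel w r ≤ G :=
  deleteEdges_le _

lemma sublevel_mono {H : SimpleGraph V} (h : G ≤ H) (w : Sym2 V → ℝ) (r : ℝ) :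
    G.sublevel w r ≤ H.sublevel w r :=
  deleteEdges_mono h

lemma Reachable.of_forall_adj_reachable {H : SimpleGraph V}
    (h : ∀ ⦃x y⦄, G.Adj x y → H.Reachable x y) {u v : V} (huv : G.Reachable u v) :
    H.Reachable u v := by
  obtain ⟨p⟩ := huv
  induction p with
  | nil => rfl
  | cons hxy _ ih => exact (h hxy).trans ih

lemma Preconnected.reachable_deleteEdges_or (hG : G.Preconnected) (a b z : V) :
    (G.deleteEdges {s(a, b)}).Reachable z a ∨ (G.deleteEdges {s(a, b)}).Reachable z b := by
  have hza := (reachable_iff_reflTransGen z a).1 (hG z a)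
  induction hza using Relation.ReflTransGen.head_induction_on with
  | refl => exact .inl .rfl
  | @head x y hxy _ ih =>
    by_cases he : s(x, y) = s(a, b)
    · rcases Sym2.eq_iff.1 he with ⟨rfl, -⟩ | ⟨rfl, -⟩
      · exact .inl .rfl
      · exact .inr .rfl
    · have hadj : (G.deleteEdges {s(a, b)}).Adj x y := by simp [hxy, he]
      exact ih.imp hadj.reachable.trans hadj.reachable.trans

lemma IsAcyclic.not_reachable_deleteEdges_of_mem_edges (hG : G.IsAcyclic) {u v a b : V}
    {p : G.Walk u v} (hp : p.IsPath) (hab : s(a, b) ∈ p.edges) :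
    ¬(G.deleteEdges {s(a, b)}).Reachable u v := by
  classical
  rw [reachable_deleteEdges_iff_exists_walk]
  rintro ⟨q, hq⟩
  obtain rfl : p = q.toPath := congrArg Subtype.val ((hG.subsingleton_path u v).elim ⟨p, hp⟩ _)
  exact hq (q.edges_toPath_subset_edges hab)

lemma IsAcyclic.sup_of_isBridge {F H : SimpleGraph V} (hF : F.IsAcyclic)
    (hH : ∀ ⦃x y⦄, H.Adj x y → (F ⊔ H).IsBridge s(x, y)) : (F ⊔ H).IsAcyclic := by
  intro z c hc
  have hsub : ∀ e ∈ c.edges, e ∈ F.edgeSet := by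
    intro e he
    rcases edgeSet_sup F H ▸ c.edges_subset_edgeSet he with hF | hH'
    · exact hF
    · cases e
      exact absurd he ((hH hH').notMem_edges_of_isCycle hc)
  exact hF (c.transfer F hsub) (hc.transfer hsub)

end SimpleGraph

section Weight

variable {V : Type*} [Finite V] (w : Sym2 V → ℝ)

lemma totalWeight_sup {F H : SimpleGraph V} (h : Disjoint F H) :
    totalWeight w (F ⊔ H) = totalWeight w F + totalWeight w H := by
  rw [totalWeight, edgeSet_sup,
    finsum_mem_union (disjoint_edgeSet.2 h) (Set.toFinite _) (Set.toFinite _)]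
  rfl

lemma totalWeight_sup_edge {F : SimpleGraph V} {u v : V} (huv : u ≠ v) (h : ¬F.Adj u v) :
    totalWeight w (F ⊔ edge u v) = totalWeight w F + w s(u, v) := by
  rw [totalWeight_sup w ((disjoint_edge F).2 h), totalWeight, totalWeight,
    edgeSet_edge_of_ne huv, finsum_mem_singleton]

lemma totalWeight_deleteEdges_add {G : SimpleGraph V} {a b : V} (hab : G.Adj a b) :
    totalWeight w (G.deleteEdges {s(a, b)}) + w s(a, b) = totalWeight w G := by
  rw [← totalWeight_sup_edge w hab.ne (by simp)]
  exact congrArg _ (sdiff_sup_cancel ((edge_le_iff G).2 (.inr hab)))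

lemma totalWeight_sublevel_add (G : SimpleGraph V) (r : ℝ) :
    totalWeight w (G.sublevel w r) + totalWeight w (G.deleteEdges {e | w e ≤ r}) =
      totalWeight w G := by
  rw [← totalWeight_sup]
  · congr 1
    ext x y
    simp only [sup_adj, sublevel_adj, deleteEdges_adj, Set.mem_ofPred_eq]
    constructor
    · rintro (h | h) <;> exact h.1
    · exact fun h => (le_or_gt (w s(x, y)) r).imp (⟨h, ·⟩) (fun hr => ⟨h, hr.not_ge⟩)
  · rw [← disjoint_edgeSet, sublevel, edgeSet_deleteEdges, edgeSet_deleteEdges]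
    exact Set.disjoint_left.2 fun e h₁ h₂ => h₂.2 (show w e ≤ r from le_of_not_gt h₁.2)

end Weight

structure IsMinSpanningTree {V : Type*} (w : Sym2 V → ℝ) (T G : SimpleGraph V) : Prop where
  le : T ≤ G
  isTree : T.IsTree
  totalWeight_le : ∀ T' : SimpleGraph V, T' ≤ G → T'.Connected → T'.IsAcyclic →
    totalWeight w T ≤ totalWeight w T'

namespace IsMinSpanningTree

variable {V : Type*} [Finite V] {w : Sym2 V → ℝ} {G T : SimpleGraph V}

theorem reachable_deleteEdges_of_weight_lt (hT : IsMinSpanningTree w T G) {a b u v : V}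
    (hab : T.Adj a b) (huv : G.Adj u v) (hw : w s(u, v) < w s(a, b)) :
    (T.deleteEdges {s(a, b)}).Reachable u v := by
  set D := T.deleteEdges {s(a, b)}
  by_contra hnr
  have hside := hT.isTree.connected.preconnected.reachable_deleteEdges_or a b
  have hD : D ≤ D ⊔ edge u v := le_sup_left
  have hba : (D ⊔ edge u v).Reachable b a := by
    have huv' : (D ⊔ edge u v).Adj u v := by simp [edge_adj, huv.ne]
    rcases hside u with hu | hu <;> rcases hside v with hv | hv
    · exact absurd (hu.trans hv.symm) hnr
    · exact (hv.mono hD).symm.trans (huv'.symm.reachable.trans (hu.mono hD))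
    · exact (hu.mono hD).symm.trans (huv'.reachable.trans (hv.mono hD))
    · exact absurd (hu.trans hv.symm) hnr
  have hconn : (D ⊔ edge u v).Connected := by
    refine (connected_iff_exists_forall_reachable _).2 ⟨a, fun z => ?_⟩
    rcases hside z with hz | hz
    · exact (hz.mono hD).symm
    · exact hba.symm.trans (hz.mono hD).symm
  have hle : D ⊔ edge u v ≤ G :=
    sup_le ((deleteEdges_le _).trans hT.le) ((edge_le_iff G).2 (.inr huv))
  have hacyc : (D ⊔ edge u v).IsAcyclic :=
    (hT.isTree.isAcyclic.anti (deleteEdges_le _)).sup_edge_of_not_reachable hnr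
  have := hT.totalWeight_le _ hle hconn hacyc
  rw [← totalWeight_deleteEdges_add w hab, totalWeight_sup_edge w huv.ne (hnr ·.reachable)]
    at this
  linarith

theorem reachable_sublevel_of_adj (hT : IsMinSpanningTree w T G) {r : ℝ} {u v : V}
    (huv : G.Adj u v) (hw : w s(u, v) ≤ r) :
    (T.sublevel w r).Reachable u v := by
  obtain ⟨p, hp, -⟩ := hT.isTree.existsUnique_path u v
  by_cases hlight : ∀ e ∈ p.edges, w e ≤ r
  · refine ⟨p.transfer _ fun e he => ?_⟩
    rw [sublevel, edgeSet_deleteEdges]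
    exact ⟨p.edges_subset_edgeSet he, (hlight e he).not_gt⟩
  · push Not at hlight
    obtain ⟨⟨a, b⟩, he, hr⟩ := hlight
    exact absurd (hT.reachable_deleteEdges_of_weight_lt (p.adj_of_mem_edges he) huv
      (hw.trans_lt hr)) (hT.isTree.isAcyclic.not_reachable_deleteEdges_of_mem_edges hp he)

theorem reachable_sublevel_iff (hT : IsMinSpanningTree w T G) (r : ℝ) {x y : V} :
    (T.sublevel w r).Reachable x y ↔ (G.sublevel w r).Reachable x y :=
  ⟨(·.mono (sublevel_mono hT.le w r)), Reachable.of_forall_adj_reachable fun _ _ h =>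
    hT.reachable_sublevel_of_adj (sublevel_adj.1 h).1 (sublevel_adj.1 h).2⟩

theorem isBridge_sup_of_weight_lt (hT : IsMinSpanningTree w T G) {F H : SimpleGraph V}
    (hF : F ≤ G) (hH : H ≤ T) {c d : V} (hcd : H.Adj c d)
    (hlt : ∀ ⦃x y⦄, F.Adj x y → w s(x, y) < w s(c, d)) : (F ⊔ H).IsBridge s(c, d) := by
  have hD : ¬(T.deleteEdges {s(c, d)}).Reachable c d :=
    isAcyclic_iff_forall_adj_isBridge.1 hT.isTree.isAcyclic (hH hcd)
  rw [isBridge_iff]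
  refine fun h => hD (h.of_forall_adj_reachable fun x y hxy => ?_)
  obtain ⟨hF' | hH', hne⟩ := (deleteEdges_adj ..).1 hxy
  · exact hT.reachable_deleteEdges_of_weight_lt (hH hcd) (hF hF') (hlt hF')
  · exact Adj.reachable ((deleteEdges_adj ..).2 ⟨hH hH', hne⟩)

theorem totalWeight_sublevel_le (hT : IsMinSpanningTree w T G) {r : ℝ} {F : SimpleGraph V}
    (hFG : F ≤ G.sublevel w r) (hF : F.IsAcyclic)
    (hreach : ∀ x y, F.Reachable x y ↔ (G.sublevel w r).Reachable x y) :
    totalWeight w (T.sublevel w r) ≤ totalWeight w F := by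
  set H := T.deleteEdges {e | w e ≤ r}
  have hHT : H ≤ T := deleteEdges_le _
  have hFG' : F ≤ G := hFG.trans (sublevel_le w r)
  have hlight : ∀ ⦃x y⦄, F.Adj x y → w s(x, y) ≤ r := fun _ _ h =>
    (sublevel_adj.1 (hFG h)).2
  have hheavy : ∀ ⦃x y⦄, H.Adj x y → r < w s(x, y) := fun _ _ h =>
    lt_of_not_ge ((deleteEdges_adj ..).1 h).2
  have hconn : (F ⊔ H).Connected := by
    have := hT.isTree.connected.nonempty
    refine ⟨fun x y => (hT.isTree.connected.preconnected x y).of_forall_adj_reachable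
      fun p q hpq => ?_⟩
    by_cases hw : w s(p, q) ≤ r
    · have := (hT.reachable_sublevel_iff r).1 (sublevel_adj.2 ⟨hpq, hw⟩).reachable
      exact ((hreach p q).2 this).mono le_sup_left
    · exact (Adj.reachable (G := H) ((deleteEdges_adj ..).2 ⟨hpq, hw⟩)).mono le_sup_right
  have hacyc : (F ⊔ H).IsAcyclic := hF.sup_of_isBridge fun _ _ hcd =>
    hT.isBridge_sup_of_weight_lt hFG' hHT hcd fun _ _ hxy =>
      (hlight hxy).trans_lt (hheavy hcd)
  have hdisj : Disjoint F H :=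
    disjoint_iff_inf_le.2 fun _ _ h => ((hheavy h.2).not_ge (hlight h.1)).elim
  have := hT.totalWeight_le _ (sup_le hFG' (hHT.trans hT.le)) hconn hacyc
  rw [totalWeight_sup w hdisj, ← totalWeight_sublevel_add w T r] at this
  linarith

end IsMinSpanningTree

theorem stmt18_general {V : Type*} [Fintype V] (G : SimpleGraph V) (w : Sym2 V → ℝ)
    (T : SimpleGraph V) (hTG : T ≤ G) (hTconn : T.Connected) (hTacyc : T.IsAcyclic)
    (hTmin : ∀ T' : SimpleGraph V, T' ≤ G → T'.Connected → T'.IsAcyclic →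
      totalWeight w T ≤ totalWeight w T')
    (r : ℝ) (Gr Tr : SimpleGraph V)
    (hGr : ∀ x y : V, Gr.Adj x y ↔ G.Adj x y ∧ w s(x, y) ≤ r)
    (hTr : ∀ x y : V, Tr.Adj x y ↔ T.Adj x y ∧ w s(x, y) ≤ r) :
    IsMSF w Tr Gr ∧ ∀ x y : V, Tr.Reachable x y ↔ Gr.Reachable x y := by
  have hT : IsMinSpanningTree w T G := ⟨hTG, ⟨hTconn, hTacyc⟩, hTmin⟩
  obtain rfl : Gr = G.sublevel w r := by ext; rw [hGr, sublevel_adj]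
  obtain rfl : Tr = T.sublevel w r := by ext; rw [hTr, sublevel_adj]
  have hreach : ∀ x y, (T.sublevel w r).Reachable x y ↔ (G.sublevel w r).Reachable x y :=
    fun _ _ => hT.reachable_sublevel_iff r
  exact ⟨⟨sublevel_mono hTG w r, hTacyc.anti (sublevel_le w r), hreach,
    fun _ hF hFacyc hFreach => hT.totalWeight_sublevel_le hF hFacyc hFreach⟩, hreach⟩

/-- If T is a minimal spanning tree of a finite connected weighted graph G, then for any
r the subgraph T_r of edges of T of weight at most r is a minimal spanning forest of the
subgraph G_r of edges of G of weight at most r; in particular T_r and G_r have the same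
connected components. -/
theorem stmt18 {V : Type*} [Fintype V] (G : SimpleGraph V) (w : Sym2 V → ℝ)
    (hG : G.Connected)
    (T : SimpleGraph V) (hTG : T ≤ G) (hTconn : T.Connected) (hTacyc : T.IsAcyclic)
    (hTmin : ∀ T' : SimpleGraph V, T' ≤ G → T'.Connected → T'.IsAcyclic →
      totalWeight w T ≤ totalWeight w T')
    (r : ℝ) (Gr Tr : SimpleGraph V)
    (hGr : ∀ x y : V, Gr.Adj x y ↔ G.Adj x y ∧ w s(x, y) ≤ r)
    (hTr : ∀ x y : V, Tr.Adj x y ↔ T.Adj x y ∧ w s(x, y) ≤ r) :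
    IsMSF w Tr Gr ∧ ∀ x y : V, Tr.Reachable x y ↔ Gr.Reachable x y :=
  stmt18_general G w T hTG hTconn hTacyc hTmin r Gr Tr hGr hTr
end
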